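/- arXiv:2304.10633 — 4 statements merged into one kernel-verified Lean document; each statement's English description precedes it below -/
import Mathlib

section
/- Let H be a finite group with subgroups X and Y such that X ≅ Y ≅ C_2^n, H = ⟨X ∪ Y⟩, and H/H' ≅ C_2^{2n} (an n-dimensional mixed dihedral group). Then X ∩ Y = 1. -/
/-!
Let `π : H → H/H'`. Since `H/H'` is abelian and `H = ⟨X ∪ Y⟩`, the map `X × Y → H/H'`,
`(x, y) ↦ π x * π y`, is a surjective homomorphism. Both sides have order `2^{2n}`, so it is
injective; but for `x ∈ X ∩ Y` the elements `(x, x⁻¹)` and `(1, 1)` have the same image.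
-/

open Function

theorem MonoidHom.coprod_comp_subtype_surjective {G A : Type*} [Group G] [CommGroup A]
    {f : G →* A} (hf : Surjective f) {X Y : Subgroup G} (hXY : X ⊔ Y = ⊤) :
    Surjective ((f.comp X.subtype).coprod (f.comp Y.subtype)) := by
  rw [← MonoidHom.range_eq_top, eq_top_iff, ← MonoidHom.range_eq_top.mpr hf,
    MonoidHom.range_eq_map, ← hXY, Subgroup.map_sup]
  refine sup_le ?_ ?_
  · rintro _ ⟨x, hx, rfl⟩
    exact ⟨(⟨x, hx⟩, 1), by simp⟩
  · rintro _ ⟨y, hy, rfl⟩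
    exact ⟨(1, ⟨y, hy⟩), by simp⟩

theorem Subgroup.inf_eq_bot_of_card_mul_card_le {G A : Type*} [Group G] [Finite G] [CommGroup A]
    {f : G →* A} (hf : Surjective f) {X Y : Subgroup G} (hXY : X ⊔ Y = ⊤)
    (hcard : Nat.card X * Nat.card Y ≤ Nat.card A) : X ⊓ Y = ⊥ := by
  set φ := (f.comp X.subtype).coprod (f.comp Y.subtype)
  have hφ_surj : Surjective φ := MonoidHom.coprod_comp_subtype_surjective hf hXY
  have hφ_card : Nat.card (X × Y) = Nat.card A :=
    le_antisymm (Nat.card_prod X Y ▸ hcard) (Nat.card_le_card_of_surjective φ hφ_surj)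
  have hφ_inj : Injective φ :=
    ((Nat.bijective_iff_surjective_and_card φ).mpr ⟨hφ_surj, hφ_card⟩).1
  refine (Subgroup.eq_bot_iff_forall _).mpr fun x ⟨hxX, hxY⟩ => ?_
  have hx : φ (⟨x, hxX⟩, ⟨x⁻¹, Y.inv_mem hxY⟩) = φ 1 := by simp [φ]
  simpa using congrArg (fun p => (p.1 : G)) (hφ_inj hx)

theorem mixed_dihedral_inf_eq_bot_general {H : Type*} [Group H] [Fintype H]
    (n : ℕ) (X Y : Subgroup H)
    (hX : Nonempty (X ≃* (Fin n → Multiplicative (ZMod 2))))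
    (hY : Nonempty (Y ≃* (Fin n → Multiplicative (ZMod 2))))
    (hgen : Subgroup.closure ((X : Set H) ∪ (Y : Set H)) = ⊤)
    (hab : Nonempty ((H ⧸ commutator H) ≃* (Fin (2 * n) → Multiplicative (ZMod 2)))) :
    X ⊓ Y = ⊥ := by
  obtain ⟨eX⟩ := hX
  obtain ⟨eY⟩ := hY
  obtain ⟨eA⟩ := hab
  have hsup : X ⊔ Y = ⊤ := by
    rw [← hgen, Subgroup.closure_union, Subgroup.closure_eq, Subgroup.closure_eq]
  refine Subgroup.inf_eq_bot_of_card_mul_card_le (f := Abelianization.of)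
    (QuotientGroup.mk'_surjective _) hsup (le_of_eq ?_)
  have hcard (m : ℕ) : Nat.card (Fin m → Multiplicative (ZMod 2)) = 2 ^ m := by simp
  -- `Abelianization H` is by definition `H ⧸ commutator H`, the domain of `eA`.
  rw [Nat.card_congr eX.toEquiv, Nat.card_congr eY.toEquiv,
    show Nat.card (Abelianization H) = _ from Nat.card_congr eA.toEquiv, hcard, hcard,
    two_mul, pow_add]

/-- If `H` is an `n`-dimensional mixed dihedral group relative to `X` and `Y`
(i.e. `X ≅ Y ≅ C₂ⁿ`, `H = ⟨X ∪ Y⟩`, and `H/H' ≅ C₂^{2n}`), then `X ∩ Y = 1`. -/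
theorem mixed_dihedral_inf_eq_bot {H : Type*} [Group H] [Fintype H]
    (n : ℕ) (hn : 1 ≤ n) (X Y : Subgroup H)
    (hX : Nonempty (X ≃* (Fin n → Multiplicative (ZMod 2))))
    (hY : Nonempty (Y ≃* (Fin n → Multiplicative (ZMod 2))))
    (hgen : Subgroup.closure ((X : Set H) ∪ (Y : Set H)) = ⊤)
    (hab : Nonempty ((H ⧸ commutator H) ≃* (Fin (2 * n) → Multiplicative (ZMod 2)))) :
    X ⊓ Y = ⊥ :=
  mixed_dihedral_inf_eq_bot_general n X Y hX hY hgen hab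
end

section
/- Let Γ be a finite graph, G ≤ Aut(Γ) acting transitively on the edge set of Γ, and N ⊴ G a normal subgroup whose orbits on vertices all have size greater than 1 but N is intransitive on each bipart. If N acts semiregularly on V(Γ) and Γ and the quotient graph Γ_N have the same valency k, then for any subgroup H with N ≤ H ≤ G, H is regular on E(Γ) if and only if H/N is regular on E(Γ_N). -/
/-!
Because `N` preserves adjacency and is transitive on each fibre of `π`, every edge of `Γ_N` at the
orbit of `v` lifts to an edge of `Γ` at `v`; as both graphs have valency `k`, `π` is then a
bijection from the neighbourhood of `v` onto that of its orbit, i.e. `Γ` covers `Γ_N`. Hence an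
element of `H` mapping one edge of `Γ_N` onto another becomes, after correction by an element of
`N`, one mapping any lift of the first edge onto any given lift of the second. This transports
edge-transitivity between `H` and `H/N`, and makes an element of `H` stabilising an edge of `Γ_N`
lie in `N` times the stabiliser of a lift. Conversely an edge stabiliser of `H` that lies in `N` is
trivial, because the semiregular `N` cannot swap the ends of an edge, which lie in distinct fibres.
-/

open Equiv

theorem Finset.bijOn_of_surjOn_of_card_le {α β : Type*} {f : α → β} {s : Finset α}
    {t : Finset β} (hf : Set.SurjOn f s t) (hst : s.card ≤ t.card) : Set.BijOn f s t := by
  classical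
  have hsub : t ⊆ s.image f := Finset.surjOn_iff_subset_image.mp hf
  exact (Finset.image_eq_iff_bijOn_of_card hst).mp
    (Finset.eq_of_subset_of_card_le hsub (Finset.card_image_le.trans hst)).symm

namespace SimpleGraph

variable {V V' : Type*} {Γ : SimpleGraph V} {Δ : SimpleGraph V'} {π : V → V'}

def IsCovering (Γ : SimpleGraph V) (Δ : SimpleGraph V') (π : V → V') : Prop :=
  ∀ v, Set.BijOn π (Γ.neighborSet v) (Δ.neighborSet (π v))

theorem IsCovering.map_adj (hπ : Γ.IsCovering Δ π) {v w : V} (h : Γ.Adj v w) :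
    Δ.Adj (π v) (π w) :=
  (hπ v).mapsTo h

theorem IsCovering.map_ne_of_adj (hπ : Γ.IsCovering Δ π) {v w : V} (h : Γ.Adj v w) :
    π v ≠ π w :=
  (hπ.map_adj h).ne

theorem IsCovering.eq_of_adj_of_map_eq (hπ : Γ.IsCovering Δ π) {v w w' : V}
    (hw : Γ.Adj v w) (hw' : Γ.Adj v w') (h : π w = π w') : w = w' :=
  (hπ v).injOn hw hw' h

theorem isCovering_of_surjOn_of_degree_eq [Fintype V] [Fintype V'] [DecidableRel Γ.Adj]
    [DecidableRel Δ.Adj] (hsurj : ∀ v, Set.SurjOn π (Γ.neighborSet v) (Δ.neighborSet (π v)))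
    (hdeg : ∀ v, Γ.degree v = Δ.degree (π v)) : Γ.IsCovering Δ π := by
  intro v
  have hbij := Finset.bijOn_of_surjOn_of_card_le (s := Γ.neighborFinset v)
    (t := Δ.neighborFinset (π v)) (by simpa only [coe_neighborFinset] using hsurj v)
    (by simp only [card_neighborFinset_eq_degree, hdeg, le_refl])
  simpa only [coe_neighborFinset] using hbij

end SimpleGraph

namespace NormalQuotient

open SimpleGraph

variable {V V' : Type*} {Γ : SimpleGraph V} {Δ : SimpleGraph V'} {N H : Subgroup (Perm V)}
  {π : V → V'}

def MapsEdge (g : Perm V) (v w v' w' : V) : Prop :=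
  (g v = v' ∧ g w = w') ∨ (g v = w' ∧ g w = v')

def MapsFiber (π : V → V') (g : Perm V) (a a' : V') : Prop :=
  ∀ v, π v = a → π (g v) = a'

def MapsQuotientEdge (π : V → V') (g : Perm V) (a b a' b' : V') : Prop :=
  (MapsFiber π g a a' ∧ MapsFiber π g b b') ∨ (MapsFiber π g a b' ∧ MapsFiber π g b a')

theorem map_apply_of_mem (hπ : ∀ v w, π v = π w ↔ ∃ n ∈ N, n v = w) {n : Perm V} (hn : n ∈ N)
    (v : V) : π (n v) = π v :=
  (hπ _ _).mpr ⟨n⁻¹, N.inv_mem hn, by simp⟩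

theorem mapsFiber_of_map_apply_eq (hπ : ∀ v w, π v = π w ↔ ∃ n ∈ N, n v = w) {g : Perm V}
    (hg : ∀ n ∈ N, g * n * g⁻¹ ∈ N) {v : V} {a' : V'} (h : π (g v) = a') :
    MapsFiber π g (π v) a' := by
  intro u hu
  obtain ⟨n, hn, rfl⟩ := (hπ v u).mp hu.symm
  rw [← h, ← map_apply_of_mem hπ (hg n hn) (g v)]
  simp [Perm.mul_apply]

theorem mapsQuotientEdge_of_mapsEdge (hπ : ∀ v w, π v = π w ↔ ∃ n ∈ N, n v = w) {g : Perm V}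
    (hg : ∀ n ∈ N, g * n * g⁻¹ ∈ N) {v w v' w' : V} (h : MapsEdge g v w v' w') :
    MapsQuotientEdge π g (π v) (π w) (π v') (π w') := by
  have hfib {x y : V} (hxy : g x = y) : MapsFiber π g (π x) (π y) :=
    mapsFiber_of_map_apply_eq hπ hg (congrArg π hxy)
  exact h.imp (fun ⟨hv, hw⟩ ↦ ⟨hfib hv, hfib hw⟩) (fun ⟨hv, hw⟩ ↦ ⟨hfib hv, hfib hw⟩)

theorem surjOn_neighborSet (hπ : ∀ v w, π v = π w ↔ ∃ n ∈ N, n v = w)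
    (hN : ∀ n ∈ N, ∀ a b, Γ.Adj a b → Γ.Adj (n a) (n b))
    (hΔ : ∀ a b, Δ.Adj a b → ∃ v w, π v = a ∧ π w = b ∧ Γ.Adj v w) (v : V) :
    Set.SurjOn π (Γ.neighborSet v) (Δ.neighborSet (π v)) := by
  intro b hb
  obtain ⟨v₀, w₀, hv₀, rfl, hadj⟩ := hΔ _ _ hb
  obtain ⟨n, hn, rfl⟩ := (hπ v₀ v).mp hv₀
  exact ⟨n w₀, hN n hn _ _ hadj, map_apply_of_mem hπ hn w₀⟩

theorem exists_mul_apply_eq (hπ : ∀ v w, π v = π w ↔ ∃ n ∈ N, n v = w)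
    (hcov : Γ.IsCovering Δ π) (hN : ∀ n ∈ N, ∀ a b, Γ.Adj a b → Γ.Adj (n a) (n b))
    {g : Perm V} (hg : ∀ a b, Γ.Adj a b → Γ.Adj (g a) (g b)) {v w v' w' : V}
    (hvw : Γ.Adj v w) (hv'w' : Γ.Adj v' w') (hv : π (g v) = π v') (hw : π (g w) = π w') :
    ∃ n ∈ N, (n * g) v = v' ∧ (n * g) w = w' := by
  obtain ⟨n, hn, hnv⟩ := (hπ _ _).mp hv
  refine ⟨n, hn, hnv, hcov.eq_of_adj_of_map_eq ?_ hv'w' ?_⟩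
  · simpa only [Perm.mul_apply, hnv] using hN n hn _ _ (hg v w hvw)
  · rw [Perm.mul_apply, map_apply_of_mem hπ hn, hw]

theorem exists_mapsEdge_of_mapsQuotientEdge (hπ : ∀ v w, π v = π w ↔ ∃ n ∈ N, n v = w)
    (hcov : Γ.IsCovering Δ π) (hN : ∀ n ∈ N, ∀ a b, Γ.Adj a b → Γ.Adj (n a) (n b))
    {g : Perm V} (hg : ∀ a b, Γ.Adj a b → Γ.Adj (g a) (g b)) {v w v' w' : V}
    (hvw : Γ.Adj v w) (hv'w' : Γ.Adj v' w')
    (h : MapsQuotientEdge π g (π v) (π w) (π v') (π w')) :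
    ∃ n ∈ N, MapsEdge (n * g) v w v' w' := by
  rcases h with ⟨hv, hw⟩ | ⟨hv, hw⟩
  · obtain ⟨n, hn, hnv, hnw⟩ :=
      exists_mul_apply_eq hπ hcov hN hg hvw hv'w' (hv v rfl) (hw w rfl)
    exact ⟨n, hn, .inl ⟨hnv, hnw⟩⟩
  · obtain ⟨n, hn, hnv, hnw⟩ :=
      exists_mul_apply_eq hπ hcov hN hg hvw hv'w'.symm (hv v rfl) (hw w rfl)
    exact ⟨n, hn, .inr ⟨hnv, hnw⟩⟩

theorem quotient_edge_transitive_of_edge_transitive (hπ : ∀ v w, π v = π w ↔ ∃ n ∈ N, n v = w)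
    (hHnorm : ∀ h ∈ H, ∀ n ∈ N, h * n * h⁻¹ ∈ N)
    (hΔ : ∀ a b, Δ.Adj a b → ∃ v w, π v = a ∧ π w = b ∧ Γ.Adj v w)
    (htrans : ∀ v w v' w', Γ.Adj v w → Γ.Adj v' w' → ∃ h ∈ H, MapsEdge h v w v' w') :
    ∀ a b a' b', Δ.Adj a b → Δ.Adj a' b' → ∃ h ∈ H, MapsQuotientEdge π h a b a' b' := by
  intro a b a' b' hab ha'b'
  obtain ⟨v, w, rfl, rfl, hvw⟩ := hΔ a b hab
  obtain ⟨v', w', rfl, rfl, hv'w'⟩ := hΔ a' b' ha'b'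
  obtain ⟨h, hh, hmaps⟩ := htrans v w v' w' hvw hv'w'
  exact ⟨h, hh, mapsQuotientEdge_of_mapsEdge hπ (hHnorm h hh) hmaps⟩

theorem mem_of_mapsQuotientEdge (hπ : ∀ v w, π v = π w ↔ ∃ n ∈ N, n v = w)
    (hcov : Γ.IsCovering Δ π) (hH : ∀ h ∈ H, ∀ a b, Γ.Adj a b → Γ.Adj (h a) (h b)) (hNH : N ≤ H)
    (hΔ : ∀ a b, Δ.Adj a b → ∃ v w, π v = a ∧ π w = b ∧ Γ.Adj v w)
    (hfree : ∀ h ∈ H, ∀ v w, Γ.Adj v w → MapsEdge h v w v w → h = 1) :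
    ∀ h ∈ H, ∀ a b, Δ.Adj a b → MapsQuotientEdge π h a b a b → h ∈ N := by
  intro h hh a b hab hmaps
  obtain ⟨v, w, rfl, rfl, hvw⟩ := hΔ a b hab
  obtain ⟨n, hn, hfix⟩ := exists_mapsEdge_of_mapsQuotientEdge hπ hcov
    (fun n hn ↦ hH n (hNH hn)) (hH h hh) hvw hvw hmaps
  have hnh : n * h = 1 := hfree _ (H.mul_mem (hNH hn) hh) v w hvw hfix
  rw [eq_inv_of_mul_eq_one_right hnh]
  exact N.inv_mem hn

theorem edge_transitive_of_quotient_edge_transitive (hπ : ∀ v w, π v = π w ↔ ∃ n ∈ N, n v = w)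
    (hcov : Γ.IsCovering Δ π) (hH : ∀ h ∈ H, ∀ a b, Γ.Adj a b → Γ.Adj (h a) (h b)) (hNH : N ≤ H)
    (htrans : ∀ a b a' b', Δ.Adj a b → Δ.Adj a' b' → ∃ h ∈ H, MapsQuotientEdge π h a b a' b') :
    ∀ v w v' w', Γ.Adj v w → Γ.Adj v' w' → ∃ h ∈ H, MapsEdge h v w v' w' := by
  intro v w v' w' hvw hv'w'
  obtain ⟨h, hh, hmaps⟩ := htrans _ _ _ _ (hcov.map_adj hvw) (hcov.map_adj hv'w')
  obtain ⟨n, hn, hnh⟩ := exists_mapsEdge_of_mapsQuotientEdge hπ hcov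
    (fun n hn ↦ hH n (hNH hn)) (hH h hh) hvw hv'w' hmaps
  exact ⟨n * h, H.mul_mem (hNH hn) hh, hnh⟩

theorem eq_one_of_mapsEdge (hπ : ∀ v w, π v = π w ↔ ∃ n ∈ N, n v = w)
    (hcov : Γ.IsCovering Δ π) (hHnorm : ∀ h ∈ H, ∀ n ∈ N, h * n * h⁻¹ ∈ N)
    (hsemireg : ∀ n ∈ N, ∀ v, n v = v → n = 1)
    (hfree : ∀ h ∈ H, ∀ a b, Δ.Adj a b → MapsQuotientEdge π h a b a b → h ∈ N) :
    ∀ h ∈ H, ∀ v w, Γ.Adj v w → MapsEdge h v w v w → h = 1 := by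
  intro h hh v w hvw hmaps
  have hhN : h ∈ N :=
    hfree h hh _ _ (hcov.map_adj hvw) (mapsQuotientEdge_of_mapsEdge hπ (hHnorm h hh) hmaps)
  refine hsemireg h hhN v ?_
  rcases hmaps with ⟨hv, -⟩ | ⟨hv, -⟩
  · exact hv
  · -- `h ∈ N` fixes the fibre of `v`, which does not contain its neighbour `w`
    exact absurd (hv ▸ map_apply_of_mem hπ hhN v) (hcov.map_ne_of_adj hvw).symm

end NormalQuotient

open NormalQuotient in
theorem regular_on_edges_iff_quotient_regular_general
    {V V' : Type*} [Fintype V] [Fintype V']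
    (Γ : SimpleGraph V) (Δ : SimpleGraph V')
    [DecidableRel Γ.Adj] [DecidableRel Δ.Adj]
    (G N H : Subgroup (Equiv.Perm V))
    (hGaut : ∀ g ∈ G, ∀ a b : V, Γ.Adj a b ↔ Γ.Adj (g a) (g b))
    (hNnormal : ∀ g ∈ G, ∀ n ∈ N, g * n * g⁻¹ ∈ N)
    (hsemireg : ∀ n ∈ N, ∀ v : V, n v = v → n = 1)
    (π : V → V')
    (hπfib : ∀ v w : V, π v = π w ↔ ∃ n ∈ N, n v = w)
    (hΔadj : ∀ a b : V', Δ.Adj a b ↔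
      (a ≠ b ∧ ∃ v w : V, π v = a ∧ π w = b ∧ Γ.Adj v w))
    (k : ℕ) (hΓdeg : ∀ v : V, Γ.degree v = k) (hΔdeg : ∀ a : V', Δ.degree a = k)
    (hNH : N ≤ H) (hHG : H ≤ G) :
    ((∀ v w v' w' : V, Γ.Adj v w → Γ.Adj v' w' →
        ∃ h ∈ H, (h v = v' ∧ h w = w') ∨ (h v = w' ∧ h w = v')) ∧
      (∀ h ∈ H, ∀ v w : V, Γ.Adj v w →
        ((h v = v ∧ h w = w) ∨ (h v = w ∧ h w = v)) → h = 1)) ↔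
    ((∀ a b a' b' : V', Δ.Adj a b → Δ.Adj a' b' →
        ∃ h ∈ H, ((∀ v, π v = a → π (h v) = a') ∧ (∀ w, π w = b → π (h w) = b')) ∨
          ((∀ v, π v = a → π (h v) = b') ∧ (∀ w, π w = b → π (h w) = a'))) ∧
      (∀ h ∈ H, ∀ a b : V', Δ.Adj a b →
        (((∀ v, π v = a → π (h v) = a) ∧ (∀ w, π w = b → π (h w) = b)) ∨
          ((∀ v, π v = a → π (h v) = b) ∧ (∀ w, π w = b → π (h w) = a))) →
        h ∈ N)) := by
  have hH : ∀ h ∈ H, ∀ a b, Γ.Adj a b → Γ.Adj (h a) (h b) :=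
    fun h hh a b ↦ (hGaut h (hHG hh) a b).mp
  have hHnorm : ∀ h ∈ H, ∀ n ∈ N, h * n * h⁻¹ ∈ N := fun h hh ↦ hNnormal h (hHG hh)
  have hΔ : ∀ a b, Δ.Adj a b → ∃ v w, π v = a ∧ π w = b ∧ Γ.Adj v w :=
    fun a b hab ↦ ((hΔadj a b).mp hab).2
  have hcov : Γ.IsCovering Δ π :=
    SimpleGraph.isCovering_of_surjOn_of_degree_eq
      (surjOn_neighborSet hπfib (fun n hn ↦ hH n (hNH hn)) hΔ)
      (fun v ↦ by rw [hΓdeg, hΔdeg])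
  exact ⟨fun ⟨htrans, hfree⟩ ↦
      ⟨quotient_edge_transitive_of_edge_transitive hπfib hHnorm hΔ htrans,
        mem_of_mapsQuotientEdge hπfib hcov hH hNH hΔ hfree⟩,
    fun ⟨htrans, hfree⟩ ↦
      ⟨edge_transitive_of_quotient_edge_transitive hπfib hcov hH hNH htrans,
        eq_one_of_mapsEdge hπfib hcov hHnorm hsemireg hfree⟩⟩

/-- Lemma on normal quotients: let `Γ` be a finite graph, `G` an edge-transitive
group of automorphisms, `N ⊴ G` semiregular with all vertex orbits of size `> 1`
but intransitive, and let `Δ` (with quotient map `π : V → V'`) be the quotient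
graph whose vertices are the `N`-orbits. If `Γ` and `Δ` have the same valency `k`,
then for `N ≤ H ≤ G`, `H` is regular on `E(Γ)` iff `H/N` is regular on `E(Δ)`. -/
theorem regular_on_edges_iff_quotient_regular
    {V V' : Type*} [Fintype V] [Fintype V'] [DecidableEq V] [DecidableEq V']
    (Γ : SimpleGraph V) (Δ : SimpleGraph V')
    [DecidableRel Γ.Adj] [DecidableRel Δ.Adj]
    (G N H : Subgroup (Equiv.Perm V))
    (hGaut : ∀ g ∈ G, ∀ a b : V, Γ.Adj a b ↔ Γ.Adj (g a) (g b))
    (hGedge : ∀ v w v' w' : V, Γ.Adj v w → Γ.Adj v' w' →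
      ∃ g ∈ G, (g v = v' ∧ g w = w') ∨ (g v = w' ∧ g w = v'))
    (hNG : N ≤ G)
    (hNnormal : ∀ g ∈ G, ∀ n ∈ N, g * n * g⁻¹ ∈ N)
    (horb : ∀ v : V, ∃ n ∈ N, n v ≠ v)
    (hintrans : ∃ v w : V, ∀ n ∈ N, n v ≠ w)
    (hsemireg : ∀ n ∈ N, ∀ v : V, n v = v → n = 1)
    (π : V → V') (hπsurj : Function.Surjective π)
    (hπfib : ∀ v w : V, π v = π w ↔ ∃ n ∈ N, n v = w)
    (hΔadj : ∀ a b : V', Δ.Adj a b ↔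
      (a ≠ b ∧ ∃ v w : V, π v = a ∧ π w = b ∧ Γ.Adj v w))
    (k : ℕ) (hΓdeg : ∀ v : V, Γ.degree v = k) (hΔdeg : ∀ a : V', Δ.degree a = k)
    (hNH : N ≤ H) (hHG : H ≤ G) :
    ((∀ v w v' w' : V, Γ.Adj v w → Γ.Adj v' w' →
        ∃ h ∈ H, (h v = v' ∧ h w = w') ∨ (h v = w' ∧ h w = v')) ∧
      (∀ h ∈ H, ∀ v w : V, Γ.Adj v w →
        ((h v = v ∧ h w = w) ∨ (h v = w ∧ h w = v)) → h = 1)) ↔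
    ((∀ a b a' b' : V', Δ.Adj a b → Δ.Adj a' b' →
        ∃ h ∈ H, ((∀ v, π v = a → π (h v) = a') ∧ (∀ w, π w = b → π (h w) = b')) ∨
          ((∀ v, π v = a → π (h v) = b') ∧ (∀ w, π w = b → π (h w) = a'))) ∧
      (∀ h ∈ H, ∀ a b : V', Δ.Adj a b →
        (((∀ v, π v = a → π (h v) = a) ∧ (∀ w, π w = b → π (h w) = b)) ∨
          ((∀ v, π v = a → π (h v) = b) ∧ (∀ w, π w = b → π (h w) = a))) →
        h ∈ N)) :=
  regular_on_edges_iff_quotient_regular_general Γ Δ G N H hGaut hNnormal hsemireg π hπfib hΔadj k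
    hΓdeg hΔdeg hNH hHG
end

section
/- Let H be a finite group with subgroups X, Y with X ∩ Y = 1 and H = ⟨X∪Y⟩, and let Γ = Cay(H, (X∪Y)\{1}) and Σ the coset graph with vertices {Xh, Yh : h ∈ H} and edges {Xh, Yg} when Xh ∩ Yg ≠ ∅. Then the map φ : z ↦ {Xz, Yz} is a bijection from H onto E(Σ), and it induces a graph isomorphism from Γ to the line graph L(Σ). -/
/-- Cayley graph: vertex set `H`, `a ~ b` iff `a⁻¹ * b ∈ S`. -/
def cayleyGraph (H : Type*) [Group H] (S : Set H) : SimpleGraph H :=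
  SimpleGraph.fromRel (fun a b => a⁻¹ * b ∈ S)

/-- The bipartite coset graph on the cosets of `X` and `Y`. -/
def cosetBipartite (H : Type*) [Group H] (X Y : Subgroup H) :
    SimpleGraph ((H ⧸ X) ⊕ (H ⧸ Y)) :=
  SimpleGraph.fromRel (fun u v =>
    ∃ h : H, u = Sum.inl (h : H ⧸ X) ∧ v = Sum.inr (h : H ⧸ Y))

/-- The line graph of `Σ`: vertices the edges of `Σ`, two distinct edges adjacent
iff they share a vertex. -/
def lineGraph {V : Type*} (Sg : SimpleGraph V) : SimpleGraph Sg.edgeSet :=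
  SimpleGraph.fromRel (fun e f => ∃ v : V, v ∈ (e : Sym2 V) ∧ v ∈ (f : Sym2 V))

/-- Let `H` be a finite group with subgroups `X, Y` with `X ∩ Y = 1` and
`H = ⟨X ∪ Y⟩`, let `Γ = Cay(H, (X ∪ Y) \ {1})` and let `Σ` be the coset graph.
Then `z ↦ {Xz, Yz}` is a bijection from `H` to `E(Σ)` inducing a graph
isomorphism from `Γ` to the line graph of `Σ`. -/
theorem cayley_iso_lineGraph_of_coset_graph (H : Type*) [Group H] [Fintype H]
    (X Y : Subgroup H)
    (hgen : Subgroup.closure ((X : Set H) ∪ (Y : Set H)) = ⊤)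
    (hXY : X ⊓ Y = ⊥) :
    ∃ e : cayleyGraph H (((X : Set H) ∪ (Y : Set H)) \ {1}) ≃g
        lineGraph (cosetBipartite H X Y),
      ∀ z : H, ((e z : Sym2 ((H ⧸ X) ⊕ (H ⧸ Y)))) =
        s(Sum.inl (z : H ⧸ X), Sum.inr (z : H ⧸ Y)) := by
  classical
  have hmem : ∀ z : H, s(Sum.inl ((z : H ⧸ X)), Sum.inr ((z : H ⧸ Y)))
      ∈ (cosetBipartite H X Y).edgeSet := by
    intro z
    show (cosetBipartite H X Y).Adj _ _
    simp only [cosetBipartite, SimpleGraph.fromRel_adj]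
    exact ⟨by simp, Or.inl ⟨z, rfl, rfl⟩⟩
  set φ : H → (cosetBipartite H X Y).edgeSet :=
    fun z => ⟨s(Sum.inl ((z : H ⧸ X)), Sum.inr ((z : H ⧸ Y))), hmem z⟩ with hφ
  have hinj : Function.Injective φ := by
    intro a b hab
    have h1 : (Sum.inl ((a : H ⧸ X)) : (H ⧸ X) ⊕ (H ⧸ Y)) = Sum.inl (b : H ⧸ X) ∧
        (Sum.inr ((a : H ⧸ Y)) : (H ⧸ X) ⊕ (H ⧸ Y)) = Sum.inr (b : H ⧸ Y) := by
      have := congrArg Subtype.val hab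
      simp only [hφ, Sym2.eq, Sym2.rel_iff', Prod.mk.injEq, Prod.swap_prod_mk] at this
      rcases this with ⟨h1, h2⟩ | ⟨h1, h2⟩
      · exact ⟨h1, h2⟩
      · exact absurd h1 (by simp)
    obtain ⟨h1, h2⟩ := h1
    have hx : a⁻¹ * b ∈ X := (QuotientGroup.eq).mp (Sum.inl.inj h1)
    have hy : a⁻¹ * b ∈ Y := (QuotientGroup.eq).mp (Sum.inr.inj h2)
    have : a⁻¹ * b ∈ X ⊓ Y := ⟨hx, hy⟩
    rw [hXY, Subgroup.mem_bot] at this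
    exact inv_mul_eq_one.mp this
  have hsurj : Function.Surjective φ := by
    rintro ⟨e, he⟩
    induction e using Sym2.ind with
    | _ u v =>
      have : (cosetBipartite H X Y).Adj u v := he
      simp only [cosetBipartite, SimpleGraph.fromRel_adj] at this
      rcases this.2 with ⟨h, hu, hv⟩ | ⟨h, hv, hu⟩
      · exact ⟨h, Subtype.ext (by simp [hφ, hu, hv])⟩
      · exact ⟨h, Subtype.ext (by simp [hφ, hu, hv, Sym2.eq_swap])⟩
  refine ⟨⟨Equiv.ofBijective φ ⟨hinj, hsurj⟩, ?_⟩, fun z => rfl⟩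
  intro a b
  show (lineGraph _).Adj (φ a) (φ b) ↔ _
  simp only [lineGraph, cayleyGraph, SimpleGraph.fromRel_adj]
  constructor
  · rintro ⟨hne, h⟩
    have habne : a ≠ b := fun h' => hne (by rw [h'])
    refine ⟨habne, ?_⟩
    have hmemS : a⁻¹ * b ∈ ((X : Set H) ∪ (Y : Set H)) \ {1} ∨
        b⁻¹ * a ∈ ((X : Set H) ∪ (Y : Set H)) \ {1} := by
      have h1 : a⁻¹ * b ≠ 1 := fun h' => habne (inv_mul_eq_one.mp h')
      rcases h with ⟨v, hv1, hv2⟩ | ⟨v, hv1, hv2⟩ <;>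
      · simp only [hφ, Sym2.mem_iff] at hv1 hv2
        left
        refine ⟨?_, h1⟩
        rcases hv1 with rfl | rfl <;> rcases hv2 with h2 | h2 <;>
          first
          | (exact Or.inl ((QuotientGroup.eq).mp (Sum.inl.inj h2)))
          | (exact Or.inl ((QuotientGroup.eq).mp (Sum.inl.inj h2.symm)))
          | (exact Or.inr ((QuotientGroup.eq).mp (Sum.inr.inj h2)))
          | (exact Or.inr ((QuotientGroup.eq).mp (Sum.inr.inj h2.symm)))
          | (exact absurd h2 (by simp))
    exact hmemS
  · rintro ⟨habne, h⟩
    have hXuY : a⁻¹ * b ∈ X ∨ a⁻¹ * b ∈ Y := by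
      rcases h with ⟨h1, _⟩ | ⟨h1, _⟩
      · exact h1
      · rcases h1 with h1 | h1
        · exact Or.inl (by simpa using X.inv_mem h1)
        · exact Or.inr (by simpa using Y.inv_mem h1)
    refine ⟨fun h' => habne (hinj h'), Or.inl ?_⟩
    rcases hXuY with hx | hy
    · exact ⟨Sum.inl ((a : H ⧸ X)), by simp [hφ], by simp [hφ, (QuotientGroup.eq).mpr hx]⟩
    · exact ⟨Sum.inr ((a : H ⧸ Y)), by simp [hφ], by simp [hφ, (QuotientGroup.eq).mpr hy]⟩
end

section
/- Let Σ be a finite connected graph, G ≤ Aut(Σ), and H ≤ G a subgroup acting semiregularly on V(Σ) with exactly two orbits U, W such that no edge of Σ has both endpoints in the same orbit. Suppose H ⊴ N := N_{Aut(Σ)}(H). Then for each vertex v ∈ V(Σ), any element of N_v fixing all neighbours of v fixes every vertex, i.e., the stabiliser N_v acts faithfully on the neighbourhood Σ(v). -/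
/-!
Suppose `g` normalises `H` and fixes a vertex `u` together with its neighbourhood. For a
neighbour `w` of `u` and a neighbour `x` of `w`, walks of length two stay inside one part of
the bipartition, so `x = h u` for some `h ∈ H`. The neighbour `h⁻¹ w` of `u` and its image `w`
are both fixed by `g`, so `g⁻¹ h g` and `h` agree at `h⁻¹ w` and semiregularity forces `g` to
commute with `h`; hence `g x = h (g u) = x`. Thus "`g` fixes a vertex and all its neighbours"
spreads along edges, and connectivity finishes the proof.
-/

theorem SimpleGraph.Connected.forall_of_adj_imp {V : Type*} {Sg : SimpleGraph V}
    (hconn : Sg.Connected) {P : V → Prop} (hstep : ∀ a b, Sg.Adj a b → P a → P b)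
    {v : V} (hv : P v) (u : V) : P u := by
  induction (SimpleGraph.reachable_iff_reflTransGen v u).mp (hconn.preconnected v u) with
  | refl => exact hv
  | tail _ hab ih => exact hstep _ _ hab ih

namespace BiCayley

open Equiv

variable {V : Type*}

theorem eq_of_apply_eq_of_semiregular {H : Subgroup (Perm V)}
    (hsemireg : ∀ h ∈ H, ∀ v : V, h v = v → h = 1)
    {a b : Perm V} (ha : a ∈ H) (hb : b ∈ H) {y : V} (hab : a y = b y) : a = b := by
  refine (inv_mul_eq_one.mp <| hsemireg _ (mul_mem (inv_mem hb) ha) y ?_).symm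
  rw [Perm.mul_apply, hab]
  exact b.symm_apply_apply y

theorem commute_of_fixes_of_fixes_apply {H : Subgroup (Perm V)}
    (hsemireg : ∀ h ∈ H, ∀ v : V, h v = v → h = 1)
    {g h : Perm V} (hh : h ∈ H) (hconj : g⁻¹ * h * g ∈ H)
    {y : V} (hy : g y = y) (hhy : g (h y) = h y) : Commute g h := by
  have hconj_eq : g⁻¹ * h * g = h :=
    eq_of_apply_eq_of_semiregular hsemireg hconj hh (y := y) <| by
      rw [Perm.mul_apply, Perm.mul_apply, hy, Perm.inv_eq_iff_eq, hhy]
  rw [mul_assoc, inv_mul_eq_iff_eq_mul] at hconj_eq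
  exact hconj_eq.symm

section Bipartite

variable {Sg : SimpleGraph V} {U W : Set V}

theorem mem_iff_not_mem_of_adj (hcover : U ∪ W = Set.univ)
    (hnoedge : ∀ a b : V, Sg.Adj a b → ¬(a ∈ U ∧ b ∈ U) ∧ ¬(a ∈ W ∧ b ∈ W))
    {a b : V} (hab : Sg.Adj a b) : a ∈ U ↔ b ∉ U := by
  refine ⟨fun ha hb => (hnoedge a b hab).1 ⟨ha, hb⟩, fun hb => ?_⟩
  refine (Set.eq_univ_iff_forall.mp hcover a).resolve_right fun ha => ?_
  exact (hnoedge a b hab).2 ⟨ha, (Set.eq_univ_iff_forall.mp hcover b).resolve_left hb⟩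

theorem exists_apply_eq_of_adj_adj (hcover : U ∪ W = Set.univ)
    (hnoedge : ∀ a b : V, Sg.Adj a b → ¬(a ∈ U ∧ b ∈ U) ∧ ¬(a ∈ W ∧ b ∈ W))
    {H : Subgroup (Perm V)}
    (hUorb : ∀ u ∈ U, ∀ u' ∈ U, ∃ h ∈ H, h u = u')
    (hWorb : ∀ w ∈ W, ∀ w' ∈ W, ∃ h ∈ H, h w = w')
    {u w x : V} (huw : Sg.Adj u w) (hwx : Sg.Adj w x) : ∃ h ∈ H, h u = x := by
  have hside : u ∈ U ↔ x ∈ U := by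
    rw [mem_iff_not_mem_of_adj hcover hnoedge huw, mem_iff_not_mem_of_adj hcover hnoedge hwx,
      not_not]
  have hW : ∀ c, c ∉ U → c ∈ W := fun c => (Set.eq_univ_iff_forall.mp hcover c).resolve_left
  by_cases hu : u ∈ U
  · exact hUorb u hu x (hside.mp hu)
  · exact hWorb u (hW u hu) x (hW x (mt hside.mpr hu))

end Bipartite

theorem apply_eq_self_of_adj_adj {Sg : SimpleGraph V} {H : Subgroup (Perm V)}
    (hHaut : ∀ h ∈ H, ∀ a b : V, Sg.Adj a b ↔ Sg.Adj (h a) (h b))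
    (hsemireg : ∀ h ∈ H, ∀ v : V, h v = v → h = 1)
    (horb : ∀ u w x : V, Sg.Adj u w → Sg.Adj w x → ∃ h ∈ H, h u = x)
    {g : Perm V} (hgnorm : ∀ h ∈ H, g⁻¹ * h * g ∈ H)
    {u : V} (hgu : g u = u) (hfix : ∀ t, Sg.Adj u t → g t = t)
    {w x : V} (huw : Sg.Adj u w) (hwx : Sg.Adj w x) : g x = x := by
  obtain ⟨h, hh, rfl⟩ := horb u w x huw hwx
  have hw : h (h⁻¹ w) = w := h.apply_symm_apply w
  have hadj : Sg.Adj u (h⁻¹ w) := by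
    rw [hHaut h hh, hw]
    exact hwx.symm
  have hcomm : Commute g h :=
    commute_of_fixes_of_fixes_apply hsemireg hh (hgnorm h hh) (hfix _ hadj)
      (by rw [hw]; exact hfix w huw)
  rw [← Perm.mul_apply, hcomm.eq, Perm.mul_apply, hgu]

end BiCayley

theorem biCayley_normaliser_locally_faithful_general {V : Type*}
    (Sg : SimpleGraph V) (hconn : Sg.Connected)
    (H : Subgroup (Equiv.Perm V))
    (hHaut : ∀ h ∈ H, ∀ a b : V, Sg.Adj a b ↔ Sg.Adj (h a) (h b))
    (hsemireg : ∀ h ∈ H, ∀ v : V, h v = v → h = 1)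
    (U W : Set V)
    (hcover : U ∪ W = Set.univ)
    (hUorb : ∀ u ∈ U, ∀ u' ∈ U, ∃ h ∈ H, h u = u')
    (hWorb : ∀ w ∈ W, ∀ w' ∈ W, ∃ h ∈ H, h w = w')
    (hnoedge : ∀ a b : V, Sg.Adj a b → ¬(a ∈ U ∧ b ∈ U) ∧ ¬(a ∈ W ∧ b ∈ W))
    (g : Equiv.Perm V)
    (hgnorm : (∀ h ∈ H, g * h * g⁻¹ ∈ H) ∧ (∀ h ∈ H, g⁻¹ * h * g ∈ H))
    (v : V) (hgv : g v = v) (hnbrs : ∀ w : V, Sg.Adj v w → g w = w) :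
    ∀ u : V, g u = u := by
  have horb : ∀ u w x : V, Sg.Adj u w → Sg.Adj w x → ∃ h ∈ H, h u = x := fun _ _ _ =>
    BiCayley.exists_apply_eq_of_adj_adj hcover hnoedge hUorb hWorb
  have hspread : ∀ a b, Sg.Adj a b →
      (g a = a ∧ ∀ t, Sg.Adj a t → g t = t) → (g b = b ∧ ∀ t, Sg.Adj b t → g t = t) :=
    fun a b hab ⟨hga, hfix⟩ => ⟨hfix b hab, fun _ =>
      BiCayley.apply_eq_self_of_adj_adj hHaut hsemireg horb hgnorm.2 hga hfix hab⟩
  exact fun u => (hconn.forall_of_adj_imp hspread ⟨hgv, hnbrs⟩ u).1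

/-- Bi-Cayley lemma: let `Sg` be a finite connected graph and `H` a group of
automorphisms of `Sg` (modelled as a subgroup of `Equiv.Perm V` preserving
adjacency) which is semiregular with exactly two orbits `U, W`, neither of which
contains an edge. Then any element `g` of the normaliser of `H` in `Aut(Sg)` that
fixes a vertex `v` and all its neighbours fixes every vertex. -/
theorem biCayley_normaliser_locally_faithful {V : Type*} [Fintype V]
    (Sg : SimpleGraph V) (hconn : Sg.Connected)
    (H : Subgroup (Equiv.Perm V))
    (hHaut : ∀ h ∈ H, ∀ a b : V, Sg.Adj a b ↔ Sg.Adj (h a) (h b))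
    (hsemireg : ∀ h ∈ H, ∀ v : V, h v = v → h = 1)
    (U W : Set V)
    (hdisj : U ∩ W = ∅) (hcover : U ∪ W = Set.univ)
    (hUorb : ∀ u ∈ U, ∀ u' ∈ U, ∃ h ∈ H, h u = u')
    (hWorb : ∀ w ∈ W, ∀ w' ∈ W, ∃ h ∈ H, h w = w')
    (hUinv : ∀ h ∈ H, ∀ u ∈ U, h u ∈ U)
    (hWinv : ∀ h ∈ H, ∀ w ∈ W, h w ∈ W)
    (hnoedge : ∀ a b : V, Sg.Adj a b → ¬(a ∈ U ∧ b ∈ U) ∧ ¬(a ∈ W ∧ b ∈ W))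
    (g : Equiv.Perm V)
    (hgaut : ∀ a b : V, Sg.Adj a b ↔ Sg.Adj (g a) (g b))
    (hgnorm : (∀ h ∈ H, g * h * g⁻¹ ∈ H) ∧ (∀ h ∈ H, g⁻¹ * h * g ∈ H))
    (v : V) (hgv : g v = v) (hnbrs : ∀ w : V, Sg.Adj v w → g w = w) :
    ∀ u : V, g u = u :=
  biCayley_normaliser_locally_faithful_general Sg hconn H hHaut hsemireg U W hcover hUorb hWorb
    hnoedge g hgnorm v hgv hnbrs
end
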